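/- Define p : (0, 1) → ℝ by p(γ) = √(2/π) · ∫₀^∞ Φ(√((1 − γ)/γ) · ξ) · e^{−ξ²/2} dξ, where Φ is the cumulative distribution function of the standard normal distribution. Then p is strictly antitone on (0, 1): for 0 < γ₁ < γ₂ < 1, p(γ₂) < p(γ₁). -/
import Mathlib

open MeasureTheory ProbabilityTheory Real

/-- The CDF `Φ` of the standard normal distribution `N(0,1)`. -/
noncomputable def stdNormalCDF (x : ℝ) : ℝ :=
  ((gaussianReal 0 1) (Set.Iic x)).toReal

lemma stdNormalCDF_mono : Monotone stdNormalCDF := by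
  intro x y hxy
  exact ENNReal.toReal_mono (measure_ne_top _ _) (measure_mono (Set.Iic_subset_Iic.2 hxy))

lemma stdNormalCDF_nonneg (x : ℝ) : 0 ≤ stdNormalCDF x := ENNReal.toReal_nonneg

lemma stdNormalCDF_le_one (x : ℝ) : stdNormalCDF x ≤ 1 := by
  have := prob_le_one (μ := gaussianReal 0 1) (s := Set.Iic x)
  simpa [stdNormalCDF] using ENNReal.toReal_mono (by norm_num) this

lemma stdNormalCDF_strictMono : StrictMono stdNormalCDF := by
  intro x y hxy
  have h1 : (gaussianReal 0 1) (Set.Ioc x y) ≠ 0 := by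
    intro h0
    have habs := ProbabilityTheory.gaussianReal_absolutelyContinuous' 0 (v := 1) one_ne_zero
    have := habs h0
    simp [Real.volume_Ioc, hxy, ENNReal.ofReal_eq_zero] at this
    linarith
  have hsplit : Set.Iic y = Set.Iic x ∪ Set.Ioc x y := (Set.Iic_union_Ioc_eq_Iic hxy.le).symm
  have hd : Disjoint (Set.Iic x) (Set.Ioc x y) := by
    exact Set.Iic_disjoint_Ioc le_rfl
  have : (gaussianReal 0 1) (Set.Iic y)
      = (gaussianReal 0 1) (Set.Iic x) + (gaussianReal 0 1) (Set.Ioc x y) := by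
    rw [hsplit, measure_union hd measurableSet_Ioc]
  unfold stdNormalCDF
  rw [this, ENNReal.toReal_add (measure_ne_top _ _) (measure_ne_top _ _)]
  have := ENNReal.toReal_pos h1 (measure_ne_top _ _)
  linarith

lemma integrandIntegrable (c : ℝ) :
    IntegrableOn (fun ξ : ℝ => stdNormalCDF (c * ξ) * Real.exp (-ξ ^ 2 / 2))
      (Set.Ioi 0) volume := by
  have hmeas : Measurable (fun ξ : ℝ => stdNormalCDF (c * ξ) * Real.exp (-ξ ^ 2 / 2)) :=
    (stdNormalCDF_mono.measurable.comp (measurable_const_mul c)).mul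
      ((measurable_id.pow_const 2).neg.div_const 2).exp
  have hbound : Integrable (fun ξ : ℝ => Real.exp (-(1/2) * ξ ^ 2)) volume :=
    integrable_exp_neg_mul_sq (by norm_num)
  refine (hbound.integrableOn).mono' hmeas.aestronglyMeasurable ?_
  filter_upwards with ξ
  rw [Real.norm_eq_abs, abs_mul, abs_of_nonneg (stdNormalCDF_nonneg _),
    abs_of_nonneg (Real.exp_pos _).le]
  have h1 : stdNormalCDF (c * ξ) ≤ 1 := stdNormalCDF_le_one _
  have h2 : Real.exp (-ξ ^ 2 / 2) = Real.exp (-(1/2) * ξ ^ 2) := by ring_nf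
  rw [h2]
  nlinarith [Real.exp_pos (-(1/2) * ξ ^ 2), stdNormalCDF_nonneg (c * ξ)]

/-- The sign-consistency probability `p(γ)` of Equation (2). -/
noncomputable def signConsistencyProb (γ : ℝ) : ℝ :=
  Real.sqrt (2 / π) *
    ∫ ξ in Set.Ioi (0 : ℝ),
      stdNormalCDF (Real.sqrt ((1 - γ) / γ) * ξ) * Real.exp (-ξ ^ 2 / 2)

/-- The sign-consistency probability `p(γ)` is strictly antitone on `(0, 1)`. -/
theorem signConsistencyProb_strictAntiOn :
    StrictAntiOn signConsistencyProb (Set.Ioo (0 : ℝ) 1) := by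
  intro γ₁ h₁ γ₂ h₂ hlt
  obtain ⟨h₁0, h₁1⟩ := h₁
  obtain ⟨h₂0, h₂1⟩ := h₂
  set c₁ := Real.sqrt ((1 - γ₁) / γ₁) with hc₁
  set c₂ := Real.sqrt ((1 - γ₂) / γ₂) with hc₂
  have hratio : (1 - γ₂) / γ₂ < (1 - γ₁) / γ₁ := by
    rw [div_lt_div_iff₀ h₂0 h₁0]
    nlinarith
  have hr2 : 0 ≤ (1 - γ₂) / γ₂ := div_nonneg (by linarith) h₂0.le
  have hclt : c₂ < c₁ := Real.sqrt_lt_sqrt hr2 hratio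
  have hc2 : 0 ≤ c₂ := Real.sqrt_nonneg _
  -- pointwise strict inequality on Ioi 0
  have hpt : ∀ ξ ∈ Set.Ioi (0:ℝ),
      0 < stdNormalCDF (c₁ * ξ) * Real.exp (-ξ ^ 2 / 2)
        - stdNormalCDF (c₂ * ξ) * Real.exp (-ξ ^ 2 / 2) := by
    intro ξ hξ
    have hξ0 : (0:ℝ) < ξ := hξ
    have : c₂ * ξ < c₁ * ξ := by nlinarith
    have hΦ := stdNormalCDF_strictMono this
    have he := Real.exp_pos (-ξ ^ 2 / 2)
    nlinarith
  have hi₁ := integrandIntegrable c₁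
  have hi₂ := integrandIntegrable c₂
  have hsub : IntegrableOn (fun ξ : ℝ => stdNormalCDF (c₁ * ξ) * Real.exp (-ξ ^ 2 / 2)
      - stdNormalCDF (c₂ * ξ) * Real.exp (-ξ ^ 2 / 2)) (Set.Ioi 0) volume := hi₁.sub hi₂
  have hpos : 0 < ∫ ξ in Set.Ioi (0:ℝ),
      (stdNormalCDF (c₁ * ξ) * Real.exp (-ξ ^ 2 / 2)
        - stdNormalCDF (c₂ * ξ) * Real.exp (-ξ ^ 2 / 2)) := by
    rw [setIntegral_pos_iff_support_of_nonneg_ae ?_ hsub]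
    · refine lt_of_lt_of_le (b := volume (Set.Ioi (0:ℝ))) (by simp)
        (measure_mono fun ξ hξ => ⟨(hpt ξ hξ).ne', hξ⟩)
    · filter_upwards [ae_restrict_mem measurableSet_Ioi] with ξ hξ
      exact (hpt ξ hξ).le
  rw [MeasureTheory.integral_sub hi₁ hi₂] at hpos
  have hsq : 0 < Real.sqrt (2 / π) := Real.sqrt_pos.2 (by positivity)
  unfold signConsistencyProb
  rw [← hc₁, ← hc₂]
  nlinarith
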